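/- Let M > 0 and q > 0. There exists a constant C > 0 (depending on M and q) such that for all a ∈ [-M, M] and all b ≥ 0, (a+b)^{*q} - a^{*q} ≥ C · min{b, b^q}. -/
import Mathlib


/-- The signed `q`-th power `x^{*q} := |x|^{q-1} x`. -/
noncomputable def sPow (q x : ℝ) : ℝ := |x| ^ (q - 1) * x

lemma sPow_of_nonneg {q x : ℝ} (hq : 0 < q) (hx : 0 ≤ x) : sPow q x = x ^ q := by
  unfold sPow
  rcases eq_or_lt_of_le hx with h | h
  · simp [← h, Real.zero_rpow hq.ne']
  · rw [abs_of_pos h, ← Real.rpow_add_one h.ne' (q - 1), sub_add_cancel]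

lemma sPow_of_nonpos {q x : ℝ} (hq : 0 < q) (hx : x ≤ 0) : sPow q x = -((-x) ^ q) := by
  unfold sPow
  rcases eq_or_lt_of_le hx with h | h
  · simp [h, Real.zero_rpow hq.ne']
  · rw [abs_of_neg h, show (-x) ^ (q - 1) * x = -((-x) ^ (q - 1) * -x) by ring,
      ← Real.rpow_add_one (by linarith : -x ≠ 0) (q - 1), sub_add_cancel]

lemma superadd {q x y : ℝ} (hq : 1 ≤ q) (hx : 0 ≤ x) (hy : 0 ≤ y) :
    x ^ q + y ^ q ≤ (x + y) ^ q := by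
  have h := NNReal.add_rpow_le_rpow_add (Real.toNNReal x) (Real.toNNReal y) hq
  rw [← Real.toNNReal_add hx hy] at h
  have h2 := NNReal.coe_le_coe.2 h
  push_cast at h2
  rwa [Real.coe_toNNReal x hx, Real.coe_toNNReal y hy,
    Real.coe_toNNReal _ (add_nonneg hx hy)] at h2

lemma subadd {q x y : ℝ} (hq0 : 0 ≤ q) (hq : q ≤ 1) (hx : 0 ≤ x) (hy : 0 ≤ y) :
    (x + y) ^ q ≤ x ^ q + y ^ q := by
  have h := NNReal.rpow_add_le_add_rpow (Real.toNNReal x) (Real.toNNReal y) hq0 hq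
  rw [← Real.toNNReal_add hx hy] at h
  have h2 := NNReal.coe_le_coe.2 h
  push_cast at h2
  rwa [Real.coe_toNNReal x hx, Real.coe_toNNReal y hy,
    Real.coe_toNNReal _ (add_nonneg hx hy)] at h2

lemma mixedpow {q x y : ℝ} (hq : 1 ≤ q) (hx : 0 ≤ x) (hy : 0 ≤ y) :
    (x + y) ^ q ≤ 2 ^ (q - 1) * (x ^ q + y ^ q) := by
  have h := NNReal.rpow_add_le_mul_rpow_add_rpow (Real.toNNReal x) (Real.toNNReal y) hq
  rw [← Real.toNNReal_add hx hy] at h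
  have h2 := NNReal.coe_le_coe.2 h
  push_cast at h2
  rwa [Real.coe_toNNReal x hx, Real.coe_toNNReal y hy,
    Real.coe_toNNReal _ (add_nonneg hx hy)] at h2

/-- Tangent-line inequality for the concave function `t ↦ t ^ q`, `0 < q ≤ 1`. -/
lemma tangent {q x h : ℝ} (hq0 : 0 < q) (hq1 : q ≤ 1) (hx : 0 < x) (hh : 0 ≤ h)
    (hxh : h ≤ x) : q * x ^ (q - 1) * h ≤ x ^ q - (x - h) ^ q := by
  have hs : -1 ≤ -(h / x) := by
    rw [neg_le_neg_iff]
    exact div_le_one_of_le₀ hxh hx.le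
  have hb := rpow_one_add_le_one_add_mul_self hs hq0.le hq1
  have hx0 : (0:ℝ) ≤ 1 + -(h / x) := by linarith
  have hxq : (0:ℝ) < x ^ q := Real.rpow_pos_of_pos hx q
  have key : (x - h) ^ q ≤ x ^ q * (1 + q * -(h / x)) := by
    have hxm : x - h = x * (1 + -(h / x)) := by field_simp; ring
    rw [hxm, Real.mul_rpow hx.le hx0]
    exact mul_le_mul_of_nonneg_left hb hxq.le
  have hxq1 : x ^ (q - 1) = x ^ q / x := Real.rpow_sub_one hx.ne' q
  rw [hxq1]
  have : x ^ q * (1 + q * -(h / x)) = x ^ q - q * (x ^ q / x) * h := by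
    field_simp; ring
  linarith [key.trans_eq this]

theorem stmt3 (M q : ℝ) (hM : 0 < M) (hq : 0 < q) :
    ∃ C > 0, ∀ a b : ℝ, a ∈ Set.Icc (-M) M → 0 ≤ b →
      C * min b (b ^ q) ≤ sPow q (a + b) - sPow q a := by
  rcases le_or_gt 1 q with hq1 | hq1
  · -- case q ≥ 1 : constant 2^(1-q)
    refine ⟨2 ^ (1 - q), Real.rpow_pos_of_pos two_pos _, fun a b _ hb => ?_⟩
    have hC1 : (2:ℝ) ^ (1 - q) ≤ 1 :=
      Real.rpow_le_one_of_one_le_of_nonpos one_le_two (by linarith)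
    have hC0 : (0:ℝ) < 2 ^ (1 - q) := Real.rpow_pos_of_pos two_pos _
    have hbq : (0:ℝ) ≤ b ^ q := Real.rpow_nonneg hb q
    have hmin : min b (b ^ q) ≤ b ^ q := min_le_right _ _
    have key : 2 ^ (1 - q) * b ^ q ≤ sPow q (a + b) - sPow q a := by
      rcases le_or_gt 0 a with ha0 | ha0
      · rw [sPow_of_nonneg hq (add_nonneg ha0 hb), sPow_of_nonneg hq ha0]
        have h1 := superadd hq1 ha0 hb
        nlinarith
      · rcases le_or_gt (a + b) 0 with hab | hab
        · rw [sPow_of_nonpos hq hab, sPow_of_nonpos hq ha0.le]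
          have h1 := superadd hq1 (by linarith : (0:ℝ) ≤ -(a + b)) hb
          rw [show -(a + b) + b = -a by ring] at h1
          nlinarith
        · rw [sPow_of_nonneg hq hab.le, sPow_of_nonpos hq ha0.le]
          have h1 := mixedpow hq1 hab.le (by linarith : (0:ℝ) ≤ -a)
          rw [show a + b + -a = b by ring] at h1
          have h2 : (0:ℝ) < 2 ^ (q - 1) := Real.rpow_pos_of_pos two_pos _
          have h3 : (2:ℝ) ^ (1 - q) * 2 ^ (q - 1) = 1 := by
            rw [← Real.rpow_add two_pos]; norm_num
          have h4 : 2 ^ (1 - q) * b ^ q ≤ 2 ^ (1 - q) * (2 ^ (q - 1) * ((a + b) ^ q + (-a) ^ q)) :=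
            mul_le_mul_of_nonneg_left h1 hC0.le
          rw [← mul_assoc, h3, one_mul] at h4
          linarith
    nlinarith
  · -- case q < 1
    set C := min (q * (2 * M) ^ (q - 1)) (1 - 2 ^ (-q)) with hC
    have h2M : (0:ℝ) < 2 * M := by linarith
    have hC1 : (0:ℝ) < q * (2 * M) ^ (q - 1) :=
      mul_pos hq (Real.rpow_pos_of_pos h2M _)
    have hC2 : (0:ℝ) < 1 - 2 ^ (-q) := by
      have : (2:ℝ) ^ (-q) < 1 :=
        Real.rpow_lt_one_of_one_lt_of_neg one_lt_two (by linarith)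
      linarith
    have hCpos : 0 < C := lt_min hC1 hC2
    refine ⟨C, hCpos, fun a b ha hb => ?_⟩
    obtain ⟨haM, haM'⟩ := ha
    have hminb : min b (b ^ q) ≤ b := min_le_left _ _
    have hminbq : min b (b ^ q) ≤ b ^ q := min_le_right _ _
    have hmin0 : 0 ≤ min b (b ^ q) := le_min hb (Real.rpow_nonneg hb q)
    have hCa : C ≤ q * (2 * M) ^ (q - 1) := min_le_left _ _
    have hCb : C ≤ 1 - 2 ^ (-q) := min_le_right _ _
    have hC1' : C ≤ 1 := by
      have : (0:ℝ) ≤ 2 ^ (-q) := Real.rpow_nonneg (by norm_num) _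
      linarith
    rcases le_or_gt 0 a with ha0 | ha0
    · rw [sPow_of_nonneg hq (add_nonneg ha0 hb), sPow_of_nonneg hq ha0]
      rcases le_or_gt b M with hbM | hbM
      · -- small b : tangent bound
        rcases eq_or_lt_of_le hb with hb0 | hb0
        · simp [← hb0, Real.zero_rpow hq.ne']
        have hx : (0:ℝ) < a + b := by linarith
        have ht := tangent hq hq1.le hx hb (by linarith : b ≤ a + b)
        rw [show a + b - b = a by ring] at ht
        have hmono : (2 * M) ^ (q - 1) ≤ (a + b) ^ (q - 1) :=
          Real.rpow_le_rpow_of_nonpos hx (by linarith) (by linarith)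
        have h5 : q * (2 * M) ^ (q - 1) * b ≤ q * (a + b) ^ (q - 1) * b := by
          have := mul_le_mul_of_nonneg_left hmono hq.le
          exact mul_le_mul_of_nonneg_right this hb
        have h6 : C * min b (b ^ q) ≤ q * (2 * M) ^ (q - 1) * b := by
          calc C * min b (b ^ q) ≤ C * b := mul_le_mul_of_nonneg_left hminb hCpos.le
            _ ≤ q * (2 * M) ^ (q - 1) * b := mul_le_mul_of_nonneg_right hCa hb
        linarith
      · -- large b
        have hab2 : a ≤ (a + b) / 2 := by linarith
        have h1 : a ^ q ≤ ((a + b) / 2) ^ q := Real.rpow_le_rpow ha0 hab2 hq.le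
        have h2 : ((a + b) / 2) ^ q = (a + b) ^ q / 2 ^ q :=
          Real.div_rpow (by linarith) (by norm_num) q
        have h3 : (2:ℝ) ^ (-q) = 1 / 2 ^ q := by
          rw [Real.rpow_neg (by norm_num)]; ring
        have h4 : b ^ q ≤ (a + b) ^ q := Real.rpow_le_rpow hb (by linarith) hq.le
        have h2q : (0:ℝ) < 2 ^ q := Real.rpow_pos_of_pos two_pos q
        have h5 : a ^ q ≤ 2 ^ (-q) * (a + b) ^ q := by
          rw [h3]; rw [h2] at h1
          have : (a + b) ^ q / 2 ^ q = 1 / 2 ^ q * (a + b) ^ q := by ring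
          linarith [h1.trans_eq this]
        have h6 : (1 - 2 ^ (-q)) * b ^ q ≤ (a + b) ^ q - a ^ q := by
          have hbq : (0:ℝ) ≤ b ^ q := Real.rpow_nonneg hb q
          nlinarith
        calc C * min b (b ^ q) ≤ C * b ^ q := mul_le_mul_of_nonneg_left hminbq hCpos.le
          _ ≤ (1 - 2 ^ (-q)) * b ^ q :=
              mul_le_mul_of_nonneg_right hCb (Real.rpow_nonneg hb q)
          _ ≤ (a + b) ^ q - a ^ q := h6
    · rcases le_or_gt (-a) b with hcb | hcb
      · -- b ≥ -a : subadditivity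
        rw [sPow_of_nonneg hq (by linarith), sPow_of_nonpos hq ha0.le]
        have h1 : b ^ q ≤ (a + b) ^ q + (-a) ^ q := by
          have := subadd hq.le hq1.le (by linarith : (0:ℝ) ≤ a + b)
            (by linarith : (0:ℝ) ≤ -a)
          rw [show a + b + -a = b by ring] at this
          exact this
        have h2 : C * min b (b ^ q) ≤ b ^ q := by
          calc C * min b (b ^ q) ≤ 1 * min b (b ^ q) :=
                mul_le_mul_of_nonneg_right hC1' hmin0
            _ = min b (b ^ q) := one_mul _
            _ ≤ b ^ q := hminbq
        linarith
      · -- b < -a : tangent at c = -a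
        rw [sPow_of_nonpos hq (by linarith), sPow_of_nonpos hq ha0.le]
        have hc : (0:ℝ) < -a := by linarith
        have ht := tangent hq hq1.le hc hb hcb.le
        rw [show -a - b = -(a + b) by ring] at ht
        have hmono : (2 * M) ^ (q - 1) ≤ (-a) ^ (q - 1) :=
          Real.rpow_le_rpow_of_nonpos hc (by linarith) (by linarith)
        have h5 : q * (2 * M) ^ (q - 1) * b ≤ q * (-a) ^ (q - 1) * b := by
          have := mul_le_mul_of_nonneg_left hmono hq.le
          exact mul_le_mul_of_nonneg_right this hb
        have h6 : C * min b (b ^ q) ≤ q * (2 * M) ^ (q - 1) * b := by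
          calc C * min b (b ^ q) ≤ C * b := mul_le_mul_of_nonneg_left hminb hCpos.le
            _ ≤ q * (2 * M) ^ (q - 1) * b := mul_le_mul_of_nonneg_right hCa hb
        linarith
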